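/- arXiv:2111.12237 — 2 statements merged into one kernel-verified Lean document; each statement's English description precedes it below -/
import Mathlib

section
/- Assume V ≥ p(S) and condition (SOLV). Fix i ∈ S and let E = {k ∈ S : γ_k = γ_i} and G = {k ∈ S : γ_k > γ_i}. Suppose Y ⊆ E with Y ≠ ∅ and E \ Y ≠ ∅, and suppose G ∪ Y is a pure strategy Nash equilibrium. Then: (i) p_k = γ_k·α_k for all k ∈ Y; (ii) g(G) = γ_i; and (iii) G is a pure strategy Nash equilibrium. -/
open Finset

variable {ι : Type*} [DecidableEq ι]

/-- `f(X) = β + Σ_{i ∈ X} α_i`. -/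
noncomputable def fval (β : ℝ) (α : ι → ℝ) (X : Finset ι) : ℝ := β + ∑ i ∈ X, α i

/-- `p(X) = Σ_{i ∈ X} p_i`. -/
noncomputable def psum (p : ι → ℝ) (X : Finset ι) : ℝ := ∑ i ∈ X, p i

/-- The payout `U_i(K)` in the Liquidity Event game, where `K ⊆ S` is the set of players
who cash out.  For `i ∈ K` it is `p_i` if `p(K) ≤ V` and the pro-rata `p_i·V/p(K)` otherwise;
for a converting player `i ∈ S \ K` it is `(p_i/(γ_i·f(S\K)))·(V − P(K))`
where `P(K) = min(p(K), V)` is the total cashout payment. -/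
noncomputable def payout (S : Finset ι) (V β : ℝ) (p γ α : ι → ℝ)
    (K : Finset ι) (i : ι) : ℝ :=
  if i ∈ K then (if psum p K ≤ V then p i else p i * V / psum p K)
  else (p i / (γ i * fval β α (S \ K))) * (V - min (psum p K) V)

/-- The profile obtained from `K` when player `i` unilaterally changes their move. -/
def deviate (K : Finset ι) (i : ι) : Finset ι := if i ∈ K then K.erase i else insert i K

/-- `K` is a pure strategy Nash equilibrium of the Liquidity Event game. -/
def isNash (S : Finset ι) (V β : ℝ) (p γ α : ι → ℝ) (K : Finset ι) : Prop :=
  K ⊆ S ∧ ∀ i ∈ S, payout S V β p γ α (deviate K i) i ≤ payout S V β p γ α K i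

/-- `g(K) = (V − p(K)) / f(S \ K)`. -/
noncomputable def gval (S : Finset ι) (V β : ℝ) (p α : ι → ℝ) (K : Finset ι) : ℝ :=
  (V - psum p K) / fval β α (S \ K)

/-- Condition (WD): for every nonempty `C ⊆ S`, `Σ_{i∈C} p_i/(γ_i·f(C)) < 1`. -/
def WD (S : Finset ι) (β : ℝ) (p γ α : ι → ℝ) : Prop :=
  ∀ C ⊆ S, C.Nonempty → ∑ i ∈ C, p i / (γ i * fval β α C) < 1

-- helper lemmas
lemma psum_le_of_subset {S X : Finset ι} {p : ι → ℝ} (hp : ∀ j ∈ S, 0 ≤ p j)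
    (h : X ⊆ S) : psum p X ≤ psum p S :=
  Finset.sum_le_sum_of_subset_of_nonneg h (fun j hj _ => hp j hj)

lemma fval_pos {β : ℝ} {α : ι → ℝ} {X : Finset ι} (hβ : 0 < β)
    (hα : ∀ j ∈ X, 0 ≤ α j) : 0 < fval β α X :=
  add_pos_of_pos_of_nonneg hβ (Finset.sum_nonneg hα)

lemma payout_mem {S K : Finset ι} {V β : ℝ} {p γ α : ι → ℝ} {k : ι}
    (hk : k ∈ K) (hpK : psum p K ≤ V) : payout S V β p γ α K k = p k := by
  simp [payout, hk, hpK]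

lemma payout_notMem {S K : Finset ι} {V β : ℝ} {p γ α : ι → ℝ} {k : ι}
    (hk : k ∉ K) (hpK : psum p K ≤ V) :
    payout S V β p γ α K k = p k / (γ k * fval β α (S \ K)) * (V - psum p K) := by
  simp [payout, hk, min_eq_left hpK]

lemma fval_insert' {β : ℝ} {α : ι → ℝ} {X : Finset ι} {k : ι} (hk : k ∉ X) :
    fval β α (insert k X) = fval β α (X) + α k := by
  simp [fval, Finset.sum_insert hk]; ring

lemma psum_erase' {p : ι → ℝ} {K : Finset ι} {k : ι} (hk : k ∈ K) :
    psum p (K.erase k) = psum p K - p k := by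
  simp [psum, Finset.sum_erase_eq_sub hk]

/-- under `V ≥ p(S)` and (SOLV), if `Y` is a nonempty proper subset of
`E = {k : γ_k = γ_i}` and `G ∪ Y` is a Nash equilibrium (`G = {k : γ_k > γ_i}`), then
(i) `p_k = γ_k·α_k` for all `k ∈ Y`, (ii) `g(G) = γ_i`, (iii) `G` is a Nash equilibrium. -/
theorem stmt4_nash_shift
    (S : Finset ι) (hS : S.Nonempty)
    (V β : ℝ) (hV : 0 < V) (hβ : 0 < β)
    (p γ α : ι → ℝ)
    (hp : ∀ i ∈ S, 0 < p i) (hγ : ∀ i ∈ S, 0 < γ i) (hα : ∀ i ∈ S, 0 ≤ α i)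
    (hge : psum p S ≤ V)
    (hsolv : ∀ i ∈ S, γ i * α i ≤ p i)
    (i : ι) (hi : i ∈ S)
    (Y : Finset ι) (hYE : Y ⊆ S.filter (fun k => γ k = γ i))
    (hYne : Y.Nonempty)
    (hEY : (S.filter (fun k => γ k = γ i) \ Y).Nonempty)
    (hGY : isNash S V β p γ α (S.filter (fun k => γ i < γ k) ∪ Y)) :
    (∀ k ∈ Y, p k = γ k * α k) ∧
    gval S V β p α (S.filter (fun k => γ i < γ k)) = γ i ∧
    isNash S V β p γ α (S.filter (fun k => γ i < γ k)) := by
  classical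
  have hp' : ∀ j ∈ S, 0 ≤ p j := fun j hj => (hp j hj).le
  set G := S.filter (fun k => γ i < γ k) with hGdef
  set K := G ∪ Y with hKdef
  have hGS : G ⊆ S := Finset.filter_subset _ _
  have hYS : Y ⊆ S := fun k hk => (Finset.mem_filter.mp (hYE hk)).1
  have hYγ : ∀ k ∈ Y, γ k = γ i := fun k hk => (Finset.mem_filter.mp (hYE hk)).2
  have hKS : K ⊆ S := Finset.union_subset hGS hYS
  have hGYdisj : Disjoint G Y := by
    rw [Finset.disjoint_left]
    intro k hkG hkY
    exact absurd (hYγ k hkY) (ne_of_gt (Finset.mem_filter.mp hkG).2)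
  have hpsub : ∀ X ⊆ S, psum p X ≤ V := fun X hX =>
    le_trans (psum_le_of_subset hp' hX) hge
  have hfpos : ∀ X ⊆ S, 0 < fval β α X := fun X hX =>
    fval_pos hβ (fun j hj => hα j (hX hj))
  obtain ⟨_, hNash⟩ := hGY
  have hDpos : 0 < fval β α (S \ K) := hfpos _ Finset.sdiff_subset
  -- Step B: for each k ∈ K, (V - psum p K) + p k ≤ γ k * (fval β α (S \ K) + α k)
  have stepB : ∀ k ∈ K, (V - psum p K) + p k ≤ γ k * (fval β α (S \ K) + α k) := by
    intro k hkK
    have hkS : k ∈ S := hKS hkK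
    have hne := hNash k hkS
    rw [payout_mem hkK (hpsub K hKS)] at hne
    have hdev : deviate K k = K.erase k := by simp [deviate, hkK]
    rw [hdev] at hne
    have hkE : k ∉ K.erase k := Finset.notMem_erase k K
    have hEsub : K.erase k ⊆ S := (Finset.erase_subset k K).trans hKS
    rw [payout_notMem hkE (hpsub _ hEsub), Finset.sdiff_erase hkS,
        fval_insert' (by simp [hkK]), psum_erase' hkK] at hne
    have hDk : (0:ℝ) < γ k * (fval β α (S \ K) + α k) :=
      mul_pos (hγ k hkS) (by linarith [hα k hkS])
    rw [div_mul_eq_mul_div, div_le_iff₀ hDk] at hne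
    have := le_of_mul_le_mul_left hne (hp k hkS)
    linarith
  -- Step A: γ i * fval β α (S \ K) ≤ V - psum p K
  have stepA : γ i * fval β α (S \ K) ≤ V - psum p K := by
    obtain ⟨j, hj⟩ := hEY
    rw [Finset.mem_sdiff, Finset.mem_filter] at hj
    obtain ⟨⟨hjS, hjγ⟩, hjY⟩ := hj
    have hjG : j ∉ G := by simp [hGdef, Finset.mem_filter, hjS, hjγ]
    have hjK : j ∉ K := by simp [hKdef, Finset.mem_union, hjG, hjY]
    have hne := hNash j hjS
    have hdev : deviate K j = insert j K := by simp [deviate, hjK]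
    rw [hdev] at hne
    have hins : insert j K ⊆ S := Finset.insert_subset hjS hKS
    rw [payout_mem (Finset.mem_insert_self j K) (hpsub _ hins),
        payout_notMem hjK (hpsub K hKS)] at hne
    have hDj : (0:ℝ) < γ j * fval β α (S \ K) := mul_pos (hγ j hjS) hDpos
    rw [div_mul_eq_mul_div, le_div_iff₀ hDj] at hne
    have := le_of_mul_le_mul_left hne (hp j hjS)
    rw [hjγ] at this
    linarith
  -- (i)
  have part1 : ∀ k ∈ Y, p k = γ k * α k := by
    intro k hkY
    have hkS : k ∈ S := hYS hkY
    have hB := stepB k (Finset.mem_union_right _ hkY)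
    rw [hYγ k hkY] at hB
    have h1 : p k ≤ γ k * α k := by rw [hYγ k hkY]; nlinarith [stepA]
    exact le_antisymm h1 (hsolv k hkS)
  -- Step C: V - psum p K = γ i * fval β α (S \ K)
  have stepC : V - psum p K = γ i * fval β α (S \ K) := by
    obtain ⟨k0, hk0⟩ := hYne
    have hB := stepB k0 (Finset.mem_union_right _ hk0)
    rw [hYγ k0 hk0, part1 k0 hk0, hYγ k0 hk0] at hB
    nlinarith [stepA]
  -- decomposition of S \ G
  have hYdisj' : Disjoint (S \ K) Y := by
    rw [Finset.disjoint_left]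
    intro x hx hxY
    exact (Finset.mem_sdiff.mp hx).2 (Finset.mem_union_right _ hxY)
  have hSG : S \ G = (S \ K) ∪ Y := by
    ext x
    simp only [Finset.mem_sdiff, Finset.mem_union, hKdef]
    constructor
    · rintro ⟨hxS, hxG⟩
      by_cases hxY : x ∈ Y
      · exact Or.inr hxY
      · exact Or.inl ⟨hxS, by simp [Finset.mem_union, hxG, hxY]⟩
    · rintro (⟨hxS, hxK⟩ | hxY)
      · exact ⟨hxS, fun h => hxK (Or.inl h)⟩
      · exact ⟨hYS hxY, Finset.disjoint_right.mp hGYdisj hxY⟩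
  have hAnn : 0 ≤ ∑ k ∈ Y, α k := Finset.sum_nonneg (fun k hk => hα k (hYS hk))
  have hFSG : fval β α (S \ G) = fval β α (S \ K) + ∑ k ∈ Y, α k := by
    rw [hSG]; simp [fval, Finset.sum_union hYdisj']; ring
  have hpY : psum p Y = γ i * ∑ k ∈ Y, α k := by
    rw [Finset.mul_sum, psum]
    exact Finset.sum_congr rfl (fun k hk => by rw [part1 k hk, hYγ k hk])
  have hpK : psum p K = psum p G + psum p Y := by
    simp [hKdef, psum, Finset.sum_union hGYdisj]
  have hVG : V - psum p G = γ i * fval β α (S \ G) := by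
    rw [hFSG, mul_add]
    rw [hpK, hpY] at stepC
    linarith
  have hFGpos : 0 < fval β α (S \ G) := hfpos _ Finset.sdiff_subset
  refine ⟨part1, ?_, ?_⟩
  · rw [gval, hVG, mul_div_assoc, div_self (ne_of_gt hFGpos), mul_one]
  · refine ⟨hGS, fun k hkS => ?_⟩
    by_cases hkG : k ∈ G
    · -- k ∈ G : deviation is erase
      have hγik : γ i < γ k := (Finset.mem_filter.mp hkG).2
      rw [payout_mem hkG (hpsub G hGS)]
      have hdev : deviate G k = G.erase k := by simp [deviate, hkG]
      rw [hdev]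
      have hkE : k ∉ G.erase k := Finset.notMem_erase k G
      have hEsub : G.erase k ⊆ S := (Finset.erase_subset k G).trans hGS
      rw [payout_notMem hkE (hpsub _ hEsub), Finset.sdiff_erase hkS,
          fval_insert' (by simp [hkG]), psum_erase' hkG]
      have hDk : (0:ℝ) < γ k * (fval β α (S \ G) + α k) :=
        mul_pos (hγ k hkS) (by linarith [hα k hkS])
      rw [div_mul_eq_mul_div, div_le_iff₀ hDk]
      apply mul_le_mul_of_nonneg_left ?_ (hp' k hkS)
      -- need : V - (psum p G - p k) ≤ γ k * (fval β α (S \ G) + α k)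
      have hB := stepB k (Finset.mem_union_left _ hkG)
      rw [stepC] at hB
      have hmul : γ i * ∑ k ∈ Y, α k ≤ γ k * ∑ k ∈ Y, α k :=
        mul_le_mul_of_nonneg_right hγik.le hAnn
      have hexp : γ k * (fval β α (S \ G) + α k)
          = γ k * fval β α (S \ K) + γ k * (∑ k ∈ Y, α k) + γ k * α k := by
        rw [hFSG]; ring
      have hexp2 : γ i * fval β α (S \ G)
          = γ i * fval β α (S \ K) + γ i * ∑ k ∈ Y, α k := by
        rw [hFSG]; ring
      rw [hexp]
      rw [hexp2] at hVG
      nlinarith [hB, hmul, hVG]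
    · -- k ∉ G : deviation is insert
      have hγle : γ k ≤ γ i := by
        by_contra h
        exact hkG (Finset.mem_filter.mpr ⟨hkS, lt_of_not_ge h⟩)
      have hdev : deviate G k = insert k G := by simp [deviate, hkG]
      rw [hdev, payout_mem (Finset.mem_insert_self k G)
            (hpsub _ (Finset.insert_subset hkS hGS)),
          payout_notMem hkG (hpsub G hGS), hVG]
      have hγk := hγ k hkS
      rw [div_mul_eq_mul_div, le_div_iff₀ (mul_pos hγk hFGpos)]
      apply mul_le_mul_of_nonneg_left ?_ (hp' k hkS)
      exact mul_le_mul_of_nonneg_right hγle hFGpos.le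
end

section
/- Assume V ≥ p(S) and that p_k = γ_k·α_k for all k ∈ S. Fix i ∈ S and let E = {k ∈ S : γ_k = γ_i} and G = {k ∈ S : γ_k > γ_i}. Suppose G is a pure strategy Nash equilibrium and g(G) = γ_i. Then for every Y ⊆ E: G ∪ Y is a pure strategy Nash equilibrium, G ∪ Y ≈ G (i.e., U_k(G ∪ Y) = U_k(G) for all k ∈ S), and U_k(G ∪ Y) = p_k for all k ∈ E. -/
open Finset

variable {ι : Type*} [DecidableEq ι]

/-!
Since `V ≥ p(S)`, every casher is paid in full and, in the pre-money case, a converter `k`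
outside a profile `K` receives `α_k · g(K)`. Hence `K` is an equilibrium as soon as `g(K)`
separates the rates: `γ_k ≥ g(K)` for cashers and `γ_k ≤ g(K)` for converters; a player with
`γ_k = g(K)` gets `p_k` on either side. Moving players of rate `c = g(G)` from converting to
cashing lowers `V − p(·)` and `c · f(S \ ·)` by the same amount, so `g(G ∪ Y) = g(G) = γ_i`.
-/

section LiquidityEvent

variable {S K Y : Finset ι} {V β c : ℝ} {p γ α : ι → ℝ} {k : ι}

omit [DecidableEq ι] in
lemma psum_le_of_subset_s6 (hp : ∀ i ∈ S, 0 ≤ p i) (hge : psum p S ≤ V) (hK : K ⊆ S) :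
    psum p K ≤ V :=
  (sum_le_sum_of_subset_of_nonneg hK fun i hi _ => hp i hi).trans hge

omit [DecidableEq ι] in
lemma fval_pos_s6 (hβ : 0 < β) (hα : ∀ i ∈ S, 0 ≤ α i) (hK : K ⊆ S) : 0 < fval β α K :=
  add_pos_of_pos_of_nonneg hβ (sum_nonneg fun i hi => hα i (hK hi))

lemma gval_eq_iff (hf : fval β α (S \ K) ≠ 0) :
    gval S V β p α K = c ↔ V - psum p K = c * fval β α (S \ K) :=
  div_eq_iff hf

lemma payout_of_mem (hK : psum p K ≤ V) (hk : k ∈ K) : payout S V β p γ α K k = p k := by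
  simp [payout, hk, hK]

lemma payout_of_notMem (hK : psum p K ≤ V) (hk : k ∉ K) (hγk : γ k ≠ 0)
    (hpk : p k = γ k * α k) : payout S V β p γ α K k = α k * gval S V β p α K := by
  rw [payout, if_neg hk, min_eq_left hK, gval, hpk]
  field_simp

lemma payout_eq_of_gamma_eq_gval (hK : psum p K ≤ V) (hγk : γ k ≠ 0) (hpk : p k = γ k * α k)
    (hkg : γ k = gval S V β p α K) : payout S V β p γ α K k = p k := by
  by_cases hk : k ∈ K
  · exact payout_of_mem hK hk
  · rw [payout_of_notMem hK hk hγk hpk, ← hkg, hpk, mul_comm]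

lemma gval_union_of_sdiff (hβ : 0 < β) (hα : ∀ i ∈ S, 0 ≤ α i) (hY : Y ⊆ S \ K)
    (hpY : ∀ k ∈ Y, p k = c * α k) (hg : gval S V β p α K = c) :
    gval S V β p α (K ∪ Y) = c := by
  have hdisj : Disjoint K Y := disjoint_right.2 fun k hk => (mem_sdiff.1 (hY hk)).2
  have hsdiff : (S \ K) \ Y = S \ (K ∪ Y) := sdiff_sdiff_left
  have hfK : fval β α (S \ K) = fval β α (S \ (K ∪ Y)) + ∑ k ∈ Y, α k := by
    rw [fval, fval, ← sum_sdiff hY, hsdiff, add_assoc]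
  have hpKY : psum p (K ∪ Y) = psum p K + c * ∑ k ∈ Y, α k := by
    rw [psum, sum_union hdisj, mul_sum, sum_congr rfl hpY, psum]
  rw [gval_eq_iff (fval_pos_s6 hβ hα sdiff_subset).ne', hfK] at hg
  rw [gval_eq_iff (fval_pos_s6 hβ hα sdiff_subset).ne', hpKY]
  linarith

lemma payout_union_eq (hKY : psum p (K ∪ Y) ≤ V) (hK : psum p K ≤ V) (hγk : γ k ≠ 0)
    (hpk : p k = γ k * α k) (hY : ∀ k ∈ Y, γ k = c) (hgK : gval S V β p α K = c)
    (hgKY : gval S V β p α (K ∪ Y) = c) :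
    payout S V β p γ α (K ∪ Y) k = payout S V β p γ α K k := by
  by_cases hkK : k ∈ K
  · rw [payout_of_mem hKY (mem_union_left Y hkK), payout_of_mem hK hkK]
  by_cases hkY : k ∈ Y
  · rw [payout_eq_of_gamma_eq_gval hKY hγk hpk ((hY k hkY).trans hgKY.symm),
      payout_eq_of_gamma_eq_gval hK hγk hpk ((hY k hkY).trans hgK.symm)]
  · rw [payout_of_notMem hKY (fun h => (mem_union.1 h).elim hkK hkY) hγk hpk,
      payout_of_notMem hK hkK hγk hpk, hgK, hgKY]

/-- `g(K \ {k})` is a mediant of `g(K)` and `γ_k`. -/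
lemma gval_erase_le (hβ : 0 < β) (hα : ∀ i ∈ S, 0 ≤ α i) (hkS : k ∈ S) (hk : k ∈ K)
    (hpk : p k = γ k * α k) (hkg : gval S V β p α K ≤ γ k) :
    gval S V β p α (K.erase k) ≤ γ k := by
  have hf := fval_pos_s6 hβ hα (sdiff_subset : S \ K ⊆ S)
  have hfk : fval β α (S \ K.erase k) = fval β α (S \ K) + α k := by
    rw [sdiff_erase hkS, fval, fval, sum_insert (fun h => (mem_sdiff.1 h).2 hk)]
    ring
  have hpk' : psum p (K.erase k) = psum p K - p k := sum_erase_eq_sub hk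
  rw [gval, div_le_iff₀ hf] at hkg
  rw [gval, div_le_iff₀ (fval_pos_s6 hβ hα sdiff_subset), hfk, hpk', hpk]
  linarith

theorem isNash_of_gval_le_of_le_gval (hβ : 0 < β) (hp : ∀ i ∈ S, 0 ≤ p i)
    (hγ : ∀ i ∈ S, 0 < γ i) (hα : ∀ i ∈ S, 0 ≤ α i) (hge : psum p S ≤ V)
    (hpre : ∀ k ∈ S, p k = γ k * α k) (hKS : K ⊆ S)
    (hcash : ∀ k ∈ K, gval S V β p α K ≤ γ k)
    (hconv : ∀ k ∈ S, k ∉ K → γ k ≤ gval S V β p α K) : isNash S V β p γ α K := by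
  refine ⟨hKS, fun k hkS => ?_⟩
  have hγk := (hγ k hkS).ne'
  have hαk := hα k hkS
  by_cases hk : k ∈ K
  · have hKk : K.erase k ⊆ S := (erase_subset k K).trans hKS
    rw [deviate, if_pos hk, payout_of_mem (psum_le_of_subset_s6 hp hge hKS) hk,
      payout_of_notMem (psum_le_of_subset_s6 hp hge hKk) (notMem_erase k K) hγk (hpre k hkS),
      hpre k hkS, mul_comm (γ k)]
    exact mul_le_mul_of_nonneg_left
      (gval_erase_le hβ hα hkS hk (hpre k hkS) (hcash k hk)) hαk
  · have hKk : insert k K ⊆ S := insert_subset hkS hKS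
    rw [deviate, if_neg hk, payout_of_mem (psum_le_of_subset_s6 hp hge hKk) (mem_insert_self k K),
      payout_of_notMem (psum_le_of_subset_s6 hp hge hKS) hk hγk (hpre k hkS), hpre k hkS,
      mul_comm (γ k)]
    exact mul_le_mul_of_nonneg_left (hconv k hkS hk) hαk

end LiquidityEvent

theorem stmt6_nash_shift_converse_general
    (S : Finset ι)
    (V β : ℝ) (hβ : 0 < β)
    (p γ α : ι → ℝ)
    (hp : ∀ i ∈ S, 0 < p i) (hγ : ∀ i ∈ S, 0 < γ i) (hα : ∀ i ∈ S, 0 ≤ α i)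
    (hge : psum p S ≤ V)
    (hpre : ∀ k ∈ S, p k = γ k * α k)
    (i : ι)
    (hg : gval S V β p α (S.filter (fun k => γ i < γ k)) = γ i) :
    ∀ Y ⊆ S.filter (fun k => γ k = γ i),
      isNash S V β p γ α (S.filter (fun k => γ i < γ k) ∪ Y) ∧
      (∀ k ∈ S, payout S V β p γ α (S.filter (fun k => γ i < γ k) ∪ Y) k
          = payout S V β p γ α (S.filter (fun k => γ i < γ k)) k) ∧
      (∀ k ∈ S.filter (fun k => γ k = γ i),
        payout S V β p γ α (S.filter (fun k => γ i < γ k) ∪ Y) k = p k) := by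
  intro Y hY
  set G := S.filter (fun k => γ i < γ k)
  have hYE : ∀ k ∈ Y, k ∈ S ∧ γ k = γ i := fun k hk => mem_filter.1 (hY hk)
  have hYG : Y ⊆ S \ G := fun k hk => mem_sdiff.2
    ⟨(hYE k hk).1, fun hG => (mem_filter.1 hG).2.ne' (hYE k hk).2⟩
  have hGS : G ⊆ S := filter_subset _ S
  have hKS : G ∪ Y ⊆ S := union_subset hGS (hYG.trans sdiff_subset)
  have hgK : gval S V β p α (G ∪ Y) = γ i := gval_union_of_sdiff hβ hα hYG
    (fun k hk => (hYE k hk).2 ▸ hpre k (hYE k hk).1) hg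
  have hp' : ∀ k ∈ S, 0 ≤ p k := fun k hk => (hp k hk).le
  have hpG := psum_le_of_subset_s6 hp' hge hGS
  have hpK := psum_le_of_subset_s6 hp' hge hKS
  have hnotG : ∀ k ∈ S, k ∉ G → γ k ≤ γ i := fun k hkS hk =>
    not_lt.1 fun h => hk (mem_filter.2 ⟨hkS, h⟩)
  refine ⟨?_, fun k hkS => ?_, fun k hkE => ?_⟩
  · refine isNash_of_gval_le_of_le_gval hβ hp' hγ hα hge hpre hKS (fun k hk => ?_)
      (fun k hkS hk => hgK ▸ hnotG k hkS fun h => hk (mem_union_left Y h))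
    rcases mem_union.1 hk with hkG | hkY
    · exact hgK ▸ (mem_filter.1 hkG).2.le
    · exact hgK ▸ (hYE k hkY).2.ge
  · exact payout_union_eq hpK hpG (hγ k hkS).ne' (hpre k hkS) (fun k hk => (hYE k hk).2) hg hgK
  · obtain ⟨hkS, hke⟩ := mem_filter.1 hkE
    exact payout_eq_of_gamma_eq_gval hpK (hγ k hkS).ne' (hpre k hkS) (hke.trans hgK.symm)

/-- pre-money case (`p_k = γ_k·α_k` everywhere), `V ≥ p(S)`:
if `G = {k : γ_k > γ_i}` is a Nash equilibrium with `g(G) = γ_i`, then for every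
`Y ⊆ E = {k : γ_k = γ_i}`, `G ∪ Y` is a Nash equilibrium, `G ∪ Y ≈ G`, and every
`k ∈ E` receives exactly `p_k` in `G ∪ Y`. -/
theorem stmt6_nash_shift_converse
    (S : Finset ι) (hS : S.Nonempty)
    (V β : ℝ) (hV : 0 < V) (hβ : 0 < β)
    (p γ α : ι → ℝ)
    (hp : ∀ i ∈ S, 0 < p i) (hγ : ∀ i ∈ S, 0 < γ i) (hα : ∀ i ∈ S, 0 ≤ α i)
    (hge : psum p S ≤ V)
    (hpre : ∀ k ∈ S, p k = γ k * α k)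
    (i : ι) (hi : i ∈ S)
    (hG : isNash S V β p γ α (S.filter (fun k => γ i < γ k)))
    (hg : gval S V β p α (S.filter (fun k => γ i < γ k)) = γ i) :
    ∀ Y ⊆ S.filter (fun k => γ k = γ i),
      isNash S V β p γ α (S.filter (fun k => γ i < γ k) ∪ Y) ∧
      (∀ k ∈ S, payout S V β p γ α (S.filter (fun k => γ i < γ k) ∪ Y) k
          = payout S V β p γ α (S.filter (fun k => γ i < γ k)) k) ∧
      (∀ k ∈ S.filter (fun k => γ k = γ i),
        payout S V β p γ α (S.filter (fun k => γ i < γ k) ∪ Y) k = p k) :=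
  stmt6_nash_shift_converse_general S V β hβ p γ α hp hγ hα hge hpre i hg
end
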